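/- arXiv:1601.05769 — 8 statements merged into one kernel-verified Lean document; each statement's English description precedes it below -/
import Mathlib

section
/- Let A = (a_{ij}) be an m×n (0,1)-matrix and let N_A denote the number of entries of A equal to 1. Let k be a positive integer with k ≤ min(m,n). If (mn/k²)·(N_A·e²/(mn))^k < 1, then there exist a permutation π₁ of [m] and a permutation π₂ of [n] such that for every (s,t) ∈ [⌊m/k⌋]×[⌊n/k⌋], the block B_{st}(π₁,π₂) contains at least one zero entry. -/
/-!
Count pairs of permutations `(π₁, π₂)`. If block `(s, t)` of the permuted matrix has no zero,
then in particular its diagonal is sent to `k` one-entries of `A`: these can be chosen in at most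
`N_A ^ k` ways, and each choice is attained by at most `(m - k)! (n - k)!` pairs. Summing over the
at most `mn / k²` blocks, fewer than `m! n!` pairs are bad, because `m ^ k ≤ e ^ k m! / (m - k)!`
(a consequence of `k ^ k ≤ e ^ k k!`) turns the hypothesis into
`(mn / k²) N_A ^ k (m - k)! (n - k)! < m! n!`.
-/

open Finset
open scoped Nat

section PermutationCounting

variable {α β ι : Type*} [Fintype α] [Fintype β] [Fintype ι] [DecidableEq α] [DecidableEq β]

theorem card_perm_apply_eq_le (a : ι ↪ α) (b : ι → α) :
    #{π : Equiv.Perm α | ∀ i, π (a i) = b i} ≤ (Fintype.card α - Fintype.card ι)! := by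
  classical
  obtain hempty | ⟨π₀, hπ₀⟩ :=
    (univ.filter fun π : Equiv.Perm α => ∀ i, π (a i) = b i).eq_empty_or_nonempty
  · simp [hempty]
  obtain rfl : b = fun i => π₀ (a i) := funext fun i => ((mem_filter.1 hπ₀).2 i).symm
  -- A permutation with prescribed values on `range a` is determined by its restriction to the
  -- complement, which maps into the complement of the prescribed values.
  let restrict (π : {π : Equiv.Perm α // ∀ i, π (a i) = π₀ (a i)}) :
      ↥(Set.range a)ᶜ ↪ ↥(Set.range (a.trans π₀.toEmbedding))ᶜ :=
    ⟨fun x => ⟨π.1 x, by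
      rintro ⟨i, hi⟩
      refine x.2 ⟨i, π.1.injective ?_⟩
      rw [π.2 i]
      exact hi⟩,
    fun x y hxy => Subtype.ext (π.1.injective (congrArg Subtype.val hxy))⟩
  have restrict_injective : Function.Injective restrict := by
    intro π π' h
    refine Subtype.ext (Equiv.ext fun y => ?_)
    by_cases hy : y ∈ Set.range a
    · obtain ⟨i, rfl⟩ := hy
      rw [π.2 i, π'.2 i]
    · exact congrArg Subtype.val (DFunLike.congr_fun h ⟨y, hy⟩)
  calc #{π : Equiv.Perm α | ∀ i, π (a i) = π₀ (a i)}
      = Fintype.card {π : Equiv.Perm α // ∀ i, π (a i) = π₀ (a i)} :=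
        (Fintype.card_subtype _).symm
    _ ≤ Fintype.card (↥(Set.range a)ᶜ ↪ ↥(Set.range (a.trans π₀.toEmbedding))ᶜ) :=
        Fintype.card_le_of_injective restrict restrict_injective
    _ = (Fintype.card α - Fintype.card ι)! := by
        simp only [Fintype.card_embedding_eq, Fintype.card_compl_set, Fintype.card_range,
          Nat.descFactorial_self]

theorem card_perm_prod_perm_diag_le (A : α → β → Bool) (a : ι ↪ α) (c : ι ↪ β) :
    #{p : Equiv.Perm α × Equiv.Perm β | ∀ i, A (p.1 (a i)) (p.2 (c i)) = true}
      ≤ #{x : α × β | A x.1 x.2 = true} ^ Fintype.card ι *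
        ((Fintype.card α - Fintype.card ι)! * (Fintype.card β - Fintype.card ι)!) := by
  classical
  let diag (p : Equiv.Perm α × Equiv.Perm β) : ι → α × β := fun i => (p.1 (a i), p.2 (c i))
  calc #{p : Equiv.Perm α × Equiv.Perm β | ∀ i, A (p.1 (a i)) (p.2 (c i)) = true}
      ≤ ((Fintype.card α - Fintype.card ι)! * (Fintype.card β - Fintype.card ι)!) *
          #(Fintype.piFinset fun _ : ι => {x : α × β | A x.1 x.2 = true}) := by
        refine card_le_mul_card_image_of_maps_to (f := diag) ?_ _ fun f _ => ?_
        · intro p hp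
          simpa [Fintype.mem_piFinset, diag] using hp
        refine (card_le_card fun p hp => ?_).trans (card_product _ _).le |>.trans
          (Nat.mul_le_mul (card_perm_apply_eq_le a fun i => (f i).1)
            (card_perm_apply_eq_le c fun i => (f i).2))
        simp only [mem_filter, mem_univ, true_and, mem_product] at hp ⊢
        exact ⟨fun i => congrArg Prod.fst (congrFun hp.2 i),
          fun i => congrArg Prod.snd (congrFun hp.2 i)⟩
    _ = _ := by rw [Fintype.card_piFinset, prod_const, card_univ, mul_comm]

end PermutationCounting

section Blocks

variable {m n k s t : ℕ}

def blockEmbedding (hs : s < m / k) : Fin k ↪ Fin m where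
  toFun l := ⟨s * k + l, by
    have hblock : (s + 1) * k ≤ m := Nat.mul_le_of_le_div k (s + 1) m hs
    rw [add_mul, one_mul] at hblock
    omega⟩
  inj' l l' h := Fin.ext (Nat.add_left_cancel (congrArg Fin.val h))

theorem blockEmbedding_mem (hs : s < m / k) (l : Fin k) :
    s * k ≤ (blockEmbedding hs l).val ∧ (blockEmbedding hs l).val < (s + 1) * k := by
  refine ⟨Nat.le_add_right _ _, ?_⟩
  rw [add_mul, one_mul]
  exact Nat.add_lt_add_left l.2 _

theorem card_perm_prod_perm_block_le (A : Fin m → Fin n → Bool) (hs : s < m / k)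
    (ht : t < n / k) :
    #{p : Equiv.Perm (Fin m) × Equiv.Perm (Fin n) | ∀ (i : Fin m) (j : Fin n),
        s * k ≤ i.val → i.val < (s + 1) * k → t * k ≤ j.val → j.val < (t + 1) * k →
        A (p.1 i) (p.2 j) = true}
      ≤ #{x : Fin m × Fin n | A x.1 x.2 = true} ^ k * ((m - k)! * (n - k)!) := by
  -- Only the diagonal of the block is used.
  calc _ ≤ #{p : Equiv.Perm (Fin m) × Equiv.Perm (Fin n) |
          ∀ l, A (p.1 (blockEmbedding hs l)) (p.2 (blockEmbedding ht l)) = true} :=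
        card_le_card <| monotone_filter_right _ fun p _ hp l =>
          hp _ _ (blockEmbedding_mem hs l).1 (blockEmbedding_mem hs l).2
            (blockEmbedding_mem ht l).1 (blockEmbedding_mem ht l).2
    _ ≤ _ := by
        convert card_perm_prod_perm_diag_le A (blockEmbedding hs) (blockEmbedding ht) using 3 <;>
          simp only [Fintype.card_fin]

end Blocks

theorem pow_mul_factorial_le_pow_mul_descFactorial {m k : ℕ} (hkm : k ≤ m) :
    m ^ k * k ! ≤ k ^ k * m.descFactorial k := by
  -- Factorwise: `m * (k - i) ≤ k * (m - i)`.
  have pow_eq_prod (c : ℕ) : c ^ k = ∏ _ ∈ range k, c := by simp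
  rw [← Nat.descFactorial_self, Nat.descFactorial_eq_prod_range, Nat.descFactorial_eq_prod_range,
    pow_eq_prod m, pow_eq_prod k, ← prod_mul_distrib, ← prod_mul_distrib]
  refine prod_le_prod' fun i _ => ?_
  rw [Nat.mul_sub, Nat.mul_sub, mul_comm k m]
  exact Nat.sub_le_sub_left (Nat.mul_le_mul_right i hkm) _

theorem pow_le_exp_one_pow_mul_descFactorial {m k : ℕ} (hkm : k ≤ m) :
    (m : ℝ) ^ k ≤ Real.exp 1 ^ k * m.descFactorial k := by
  have hk : (k : ℝ) ^ k ≤ Real.exp 1 ^ k * k ! := by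
    rw [Real.exp_one_pow, ← div_le_iff₀ (by positivity)]
    exact Real.pow_div_factorial_le_exp _ k.cast_nonneg k
  refine le_of_mul_le_mul_right ?_ (show (0 : ℝ) < (k ! : ℝ) by positivity)
  calc (m : ℝ) ^ k * k ! ≤ k ^ k * m.descFactorial k := by
        exact_mod_cast pow_mul_factorial_le_pow_mul_descFactorial hkm
    _ ≤ Real.exp 1 ^ k * k ! * m.descFactorial k := by gcongr
    _ = Real.exp 1 ^ k * m.descFactorial k * k ! := by ring

theorem div_mul_div_mul_pow_lt_descFactorial_mul_descFactorial {m n k N : ℕ} (hk : 0 < k)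
    (hkm : k ≤ m) (hkn : k ≤ n)
    (h : ((m * n : ℝ) / (k : ℝ) ^ 2) * (((N : ℝ) * Real.exp 1 ^ 2) / (m * n)) ^ k < 1) :
    m / k * (n / k) * N ^ k < m.descFactorial k * n.descFactorial k := by
  have hmn : (0 : ℝ) < m * n := mod_cast Nat.mul_pos (hk.trans_le hkm) (hk.trans_le hkn)
  have hblocks : ((m / k : ℕ) : ℝ) * (n / k : ℕ) ≤ m * n / (k : ℝ) ^ 2 := by
    rw [sq, mul_div_mul_comm]
    exact mul_le_mul Nat.cast_div_le Nat.cast_div_le (by positivity) (by positivity)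
  suffices ((m / k : ℕ) : ℝ) * (n / k : ℕ) * N ^ k * (Real.exp 1 ^ 2) ^ k
      < m.descFactorial k * n.descFactorial k * (Real.exp 1 ^ 2) ^ k by
    exact_mod_cast lt_of_mul_lt_mul_right this (by positivity)
  calc ((m / k : ℕ) : ℝ) * (n / k : ℕ) * N ^ k * (Real.exp 1 ^ 2) ^ k
      ≤ m * n / (k : ℝ) ^ 2 * (N * Real.exp 1 ^ 2) ^ k := by
        rw [mul_assoc, ← mul_pow]
        gcongr
    _ = m * n / (k : ℝ) ^ 2 * (N * Real.exp 1 ^ 2 / (m * n)) ^ k * (m * n) ^ k := by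
        rw [mul_assoc, ← mul_pow, div_mul_cancel₀ _ hmn.ne']
    _ < (m * n) ^ k := mul_lt_of_lt_one_left (pow_pos hmn k) h
    _ ≤ (Real.exp 1 ^ k * m.descFactorial k) * (Real.exp 1 ^ k * n.descFactorial k) := by
        rw [mul_pow]
        gcongr
        exacts [pow_le_exp_one_pow_mul_descFactorial hkm, pow_le_exp_one_pow_mul_descFactorial hkn]
    _ = m.descFactorial k * n.descFactorial k * (Real.exp 1 ^ 2) ^ k := by ring

theorem factorial_mul_factorial_le_of_forall_exists_block {m n k : ℕ} (A : Fin m → Fin n → Bool)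
    (hbad : ∀ (π₁ : Equiv.Perm (Fin m)) (π₂ : Equiv.Perm (Fin n)), ∃ s t : ℕ,
      s < m / k ∧ t < n / k ∧ ∀ (i : Fin m) (j : Fin n),
        s * k ≤ i.val → i.val < (s + 1) * k → t * k ≤ j.val → j.val < (t + 1) * k →
        A (π₁ i) (π₂ j) = true) :
    m ! * n ! ≤ m / k * (n / k) *
      (#{x : Fin m × Fin n | A x.1 x.2 = true} ^ k * ((m - k)! * (n - k)!)) := by
  let allOnes (st : ℕ × ℕ) : Finset (Equiv.Perm (Fin m) × Equiv.Perm (Fin n)) :=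
    {p | ∀ (i : Fin m) (j : Fin n), st.1 * k ≤ i.val → i.val < (st.1 + 1) * k →
      st.2 * k ≤ j.val → j.val < (st.2 + 1) * k → A (p.1 i) (p.2 j) = true}
  calc m ! * n ! = #(univ : Finset (Equiv.Perm (Fin m) × Equiv.Perm (Fin n))) := by
        simp [Fintype.card_perm]
    _ ≤ #((range (m / k) ×ˢ range (n / k)).biUnion allOnes) := card_le_card fun p _ => by
        obtain ⟨s, t, hs, ht, hst⟩ := hbad p.1 p.2
        exact mem_biUnion.2 ⟨(s, t), by simp [hs, ht], by simpa [allOnes] using hst⟩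
    _ ≤ #(range (m / k) ×ˢ range (n / k)) *
          (#{x : Fin m × Fin n | A x.1 x.2 = true} ^ k * ((m - k)! * (n - k)!)) :=
        card_biUnion_le_card_mul _ _ _ fun st hst => by
          simp only [mem_product, mem_range] at hst
          exact card_perm_prod_perm_block_le A hst.1 hst.2
    _ = _ := by rw [card_product, card_range, card_range]

theorem matrix_good_permutations_general (m n k : ℕ) (A : Fin m → Fin n → Bool)
    (hlt : ((m * n : ℝ) / (k : ℝ) ^ 2) *
        (((Nat.card {p : Fin m × Fin n // A p.1 p.2 = true} : ℝ) * Real.exp 1 ^ 2) /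
          (m * n)) ^ k < 1) :
    ∃ (π₁ : Equiv.Perm (Fin m)) (π₂ : Equiv.Perm (Fin n)),
      ∀ s t : ℕ, s < m / k → t < n / k →
        ∃ (i : Fin m) (j : Fin n),
          s * k ≤ i.val ∧ i.val < (s + 1) * k ∧
          t * k ≤ j.val ∧ j.val < (t + 1) * k ∧
          A (π₁ i) (π₂ j) = false := by
  by_contra hbad
  push Not at hbad
  simp only [ne_eq, Bool.not_eq_false] at hbad
  -- Some block exists, which forces `0 < k ≤ min m n`.
  obtain ⟨s, t, hs, ht, -⟩ := hbad 1 1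
  obtain ⟨hk, hkm⟩ := Nat.div_pos_iff.1 (s.zero_le.trans_lt hs)
  have hkn := (Nat.div_pos_iff.1 (t.zero_le.trans_lt ht)).2
  rw [Nat.card_eq_fintype_card, Fintype.card_subtype] at hlt
  have hcount := factorial_mul_factorial_le_of_forall_exists_block A hbad
  have hprob := div_mul_div_mul_pow_lt_descFactorial_mul_descFactorial hk hkm hkn hlt
  rw [← Nat.factorial_mul_descFactorial hkm, ← Nat.factorial_mul_descFactorial hkn] at hcount
  have hfact : 0 < (m - k)! * (n - k)! := Nat.mul_pos (Nat.factorial_pos _) (Nat.factorial_pos _)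
  linarith [Nat.mul_lt_mul_of_pos_right hprob hfact]

/-- **Existence of good permutations** (Lemma 2 of the paper).
`A : Fin m → Fin n → Bool` is a (0,1)-matrix (1 ↔ `true`); blocks are indexed
with `s < m / k`, `t < n / k` (0-indexed), block `(s,t)` consisting of rows
`s*k, …, s*k + k - 1` and columns `t*k, …, t*k + k - 1` of the permuted matrix. -/
theorem matrix_good_permutations (m n k : ℕ) (hk : 0 < k) (hkm : k ≤ m) (hkn : k ≤ n)
    (A : Fin m → Fin n → Bool)
    (hlt : ((m * n : ℝ) / (k : ℝ) ^ 2) *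
        (((Nat.card {p : Fin m × Fin n // A p.1 p.2 = true} : ℝ) * Real.exp 1 ^ 2) /
          (m * n)) ^ k < 1) :
    ∃ (π₁ : Equiv.Perm (Fin m)) (π₂ : Equiv.Perm (Fin n)),
      ∀ s t : ℕ, s < m / k → t < n / k →
        ∃ (i : Fin m) (j : Fin n),
          s * k ≤ i.val ∧ i.val < (s + 1) * k ∧
          t * k ≤ j.val ∧ j.val < (t + 1) * k ∧
          A (π₁ i) (π₂ j) = false :=
  matrix_good_permutations_general m n k A hlt
end

section
/- Let A = (a_i)_{i=1}^m be a (0,1)-vector and let N_A denote the number of entries of A equal to 1. Let k be a positive integer with k ≤ m. If (m/k)·(N_A·e/m)^k < 1, then there exists a permutation π of [m] such that for every s ∈ [⌊m/k⌋], the vector B_s(π) contains at least one zero entry. -/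
/-!
The hypothesis is strong enough for a counting argument: it forces `N_A + ⌊m/k⌋ ≤ m`.
For `k = 1` it reads `N_A e < 1`, so `A = 0`; for `k ≥ 2`, if `N_A > m - ⌊m/k⌋ ≥ m/2` then
`N_A e / m > e/2 > 1` and `(m/k) (N_A e/m)^k ≥ 1`. Hence `A` has at least `⌊m/k⌋` zeros, and a
permutation sending the first position of every block to a zero of `A` does the job.
-/

open Finset

theorem Equiv.Perm.exists_forall_mem_of_card_le {α : Type*} [Fintype α] [DecidableEq α]
    {s t : Finset α} (h : #s ≤ #t) : ∃ π : Equiv.Perm α, ∀ x ∈ s, π x ∈ t := by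
  obtain ⟨t', ht't, hcard⟩ := exists_subset_card_eq h
  have : Fintype.card s = Fintype.card t' := by simp [hcard]
  let e : {x // x ∈ s} ≃ {x // x ∈ t'} := Fintype.equivOfCardEq this
  exact ⟨e.extendSubtype, fun x hx => ht't (e.extendSubtype_mem x hx)⟩

theorem exists_perm_forall_block_mem {m k : ℕ} (hk : 0 < k) (T : Finset (Fin m))
    (hT : m / k ≤ #T) :
    ∃ π : Equiv.Perm (Fin m), ∀ s < m / k,
      ∃ i : Fin m, s * k ≤ i.val ∧ i.val < (s + 1) * k ∧ π i ∈ T := by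
  have hblock : ∀ s < m / k, s * k < m := fun s hs =>
    (Nat.mul_lt_mul_right hk).mpr hs |>.trans_le (Nat.div_mul_le_self m k)
  let start : Fin (m / k) → Fin m := fun s => ⟨s * k, hblock s s.isLt⟩
  have hcard : #(univ.image start) ≤ #T :=
    card_image_le.trans (by simpa using hT)
  obtain ⟨π, hπ⟩ := Equiv.Perm.exists_forall_mem_of_card_le hcard
  refine ⟨π, fun s hs => ⟨start ⟨s, hs⟩, le_rfl, ?_, hπ _ (mem_image_of_mem _ (mem_univ _))⟩⟩
  simp only [start, add_mul, one_mul]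
  omega

theorem add_div_le_of_mul_pow_lt_one {m k N : ℕ} (hk : 0 < k) (hkm : k ≤ m)
    (h : ((m : ℝ) / k) * ((N : ℝ) * Real.exp 1 / m) ^ k < 1) : N + m / k ≤ m := by
  have hm : (0 : ℝ) < m := by exact_mod_cast hk.trans_le hkm
  obtain rfl | hk2 : k = 1 ∨ 2 ≤ k := by omega
  · have hNe : (N : ℝ) * Real.exp 1 < 1 := by
      rwa [Nat.cast_one, div_one, pow_one, mul_div_cancel₀ _ hm.ne'] at h
    have hN : N = 0 := by
      by_contra hN
      have : (1 : ℝ) ≤ N := by exact_mod_cast Nat.one_le_iff_ne_zero.mpr hN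
      nlinarith [Real.add_one_le_exp 1]
    simp [hN]
  · by_contra! hlt
    have h2N : m < 2 * N := by
      have : m / k ≤ m / 2 := Nat.div_le_div_left hk2 two_pos
      omega
    have hx : 1 ≤ (N : ℝ) * Real.exp 1 / m := by
      have h2N' : (m : ℝ) < 2 * N := by exact_mod_cast h2N
      rw [one_le_div hm]
      nlinarith [Real.add_one_le_exp 1]
    have hmk : (1 : ℝ) ≤ m / k := by
      rw [one_le_div (by positivity)]
      exact_mod_cast hkm
    linarith [one_le_mul_of_one_le_of_one_le hmk (one_le_pow₀ (n := k) hx)]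

/-- **Vector version of the good-permutation lemma** (Lemma 6 of the paper).
`A : Fin m → Bool` is a (0,1)-vector (1 ↔ `true`); blocks are indexed with
`s < m / k` (0-indexed), block `s` consisting of entries `s*k, …, s*k + k - 1`
of the permuted vector. -/
theorem vector_good_permutation (m k : ℕ) (hk : 0 < k) (hkm : k ≤ m)
    (A : Fin m → Bool)
    (hlt : ((m : ℝ) / (k : ℝ)) *
        (((Nat.card {i : Fin m // A i = true} : ℝ) * Real.exp 1) / m) ^ k < 1) :
    ∃ π : Equiv.Perm (Fin m),
      ∀ s : ℕ, s < m / k →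
        ∃ i : Fin m, s * k ≤ i.val ∧ i.val < (s + 1) * k ∧ A (π i) = false := by
  have hcount := add_div_le_of_mul_pow_lt_one hk hkm hlt
  have hzeros : m / k ≤ #(univ.filter fun i => A i = false) := by
    have hsplit := card_filter_add_card_filter_not (s := (univ : Finset (Fin m))) (A · = true)
    rw [Nat.card_eq_fintype_card, Fintype.card_subtype] at hcount
    simp only [Bool.not_eq_true, card_univ, Fintype.card_fin] at hsplit
    omega
  obtain ⟨π, hπ⟩ := exists_perm_forall_block_mem hk _ hzeros
  refine ⟨π, fun s hs => ?_⟩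
  obtain ⟨i, hi₁, hi₂, hiT⟩ := hπ s hs
  exact ⟨i, hi₁, hi₂, (mem_filter.mp hiT).2⟩
end

section
/- Let 𝒞 ⊆ ℝ²_{≥0} be non-empty, compact, convex, and closed under projections onto the axes. Then 𝒞 = {(x,y) ∈ ℝ²_{≥0} | for all α ∈ [0,1], αx + (1−α)y ≤ C^α(𝒞)}. -/
/-!
If `p ≥ 0` were outside `𝒞`, a separating functional `f = (a, b)` would give
`a q₁ + b q₂ < u < f p` on `𝒞`. Closure under projections lets us replace `a, b` by their
positive parts without leaving `𝒞`, and `f p` only grows since `p ≥ 0`. Normalising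
`(a⁺, b⁺)` to `(α, 1 - α)` then contradicts `α p₁ + (1 - α) p₂ ≤ C^α(𝒞)`.
-/

open Set

theorem map_prod_eq_mul_fst_add_mul_snd {R F : Type*} [CommSemiring R] [FunLike F (R × R) R]
    [LinearMapClass F R (R × R) R] (f : F) (q : R × R) :
    f q = f (1, 0) * q.1 + f (0, 1) * q.2 := by
  have hq : q = q.1 • ((1, 0) : R × R) + q.2 • ((0, 1) : R × R) := by simp
  conv_lhs => rw [hq]
  rw [map_add, map_smul, map_smul, smul_eq_mul, smul_eq_mul, mul_comm q.1, mul_comm q.2]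

theorem zero_mem_of_forall_proj_mem {C : Set (ℝ × ℝ)}
    (hproj : ∀ p ∈ C, ((p.1, 0) : ℝ × ℝ) ∈ C ∧ ((0, p.2) : ℝ × ℝ) ∈ C) (hne : C.Nonempty) :
    ((0, 0) : ℝ × ℝ) ∈ C := by
  obtain ⟨q, hq⟩ := hne
  simpa using (hproj _ (hproj q hq).1).2

theorem max_zero_mul_fst_add_max_zero_mul_snd_le {C : Set (ℝ × ℝ)}
    (hproj : ∀ p ∈ C, ((p.1, 0) : ℝ × ℝ) ∈ C ∧ ((0, p.2) : ℝ × ℝ) ∈ C) {a b u : ℝ}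
    (h : ∀ q ∈ C, a * q.1 + b * q.2 ≤ u) {q : ℝ × ℝ} (hq : q ∈ C) :
    max a 0 * q.1 + max b 0 * q.2 ≤ u := by
  -- each sign pattern of `(a, b)` is handled by one of `q`, `(q₁, 0)`, `(0, q₂)`, `(0, 0)`
  have h₁ := h _ (hproj q hq).1
  have h₂ := h _ (hproj q hq).2
  have h₀ := h _ (hproj _ (hproj q hq).1).2
  have h₁₂ := h q hq
  rcases le_total a 0 with ha | ha <;> rcases le_total b 0 with hb | hb <;>
    simp_all

theorem mul_fst_add_mul_snd_le_of_forall_le_sSup {C : Set (ℝ × ℝ)} (h₀ : ((0, 0) : ℝ × ℝ) ∈ C)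
    {a b u : ℝ} (ha : 0 ≤ a) (hb : 0 ≤ b) (hC : ∀ q ∈ C, a * q.1 + b * q.2 ≤ u) {p : ℝ × ℝ}
    (hp : ∀ α ∈ Icc (0 : ℝ) 1,
      α * p.1 + (1 - α) * p.2 ≤ sSup ((fun q : ℝ × ℝ => α * q.1 + (1 - α) * q.2) '' C)) :
    a * p.1 + b * p.2 ≤ u := by
  rcases (add_nonneg ha hb).eq_or_lt with hs | hs
  · obtain ⟨rfl, rfl⟩ : a = 0 ∧ b = 0 := ⟨by linarith, by linarith⟩
    simpa using hC _ h₀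
  set s := a + b
  have hα : a / s ∈ Icc (0 : ℝ) 1 :=
    ⟨div_nonneg ha hs.le, (div_le_one hs).2 (le_add_of_nonneg_right hb)⟩
  have hscale : ∀ q : ℝ × ℝ, s * (a / s * q.1 + (1 - a / s) * q.2) = a * q.1 + b * q.2 := by
    intro q
    field_simp
    ring
  have hsup : sSup ((fun q : ℝ × ℝ => a / s * q.1 + (1 - a / s) * q.2) '' C) ≤ u / s := by
    refine csSup_le ⟨_, mem_image_of_mem _ h₀⟩ ?_
    rintro _ ⟨q, hq, rfl⟩
    rw [le_div_iff₀ hs, mul_comm, hscale]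
    exact hC q hq
  calc a * p.1 + b * p.2 = s * (a / s * p.1 + (1 - a / s) * p.2) := (hscale p).symm
    _ ≤ s * (u / s) := by gcongr; exact (hp _ hα).trans hsup
    _ = u := mul_div_cancel₀ u hs.ne'

/-- **Characterization of special regions in the plane** (Lemma 4 of the paper).
A non-empty, compact, convex subset of `ℝ²_{≥0}` that is closed under projections
onto the axes equals the set of nonnegative pairs dominated by all its support
function values `C^α = max_{(x,y) ∈ 𝒞} (α x + (1 - α) y)`, `α ∈ [0,1]`. -/
theorem region_characterization (C : Set (ℝ × ℝ)) (hne : C.Nonempty)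
    (hcomp : IsCompact C) (hconv : Convex ℝ C)
    (hnonneg : ∀ p ∈ C, 0 ≤ p.1 ∧ 0 ≤ p.2)
    (hproj : ∀ p ∈ C, ((p.1, 0) : ℝ × ℝ) ∈ C ∧ ((0, p.2) : ℝ × ℝ) ∈ C) :
    C = {p : ℝ × ℝ | 0 ≤ p.1 ∧ 0 ≤ p.2 ∧
      ∀ α ∈ Set.Icc (0 : ℝ) 1,
        α * p.1 + (1 - α) * p.2 ≤
          sSup ((fun q : ℝ × ℝ => α * q.1 + (1 - α) * q.2) '' C)} := by
  ext p
  constructor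
  · intro hp
    exact ⟨(hnonneg p hp).1, (hnonneg p hp).2, fun α _ =>
      le_csSup (hcomp.image (by fun_prop)).bddAbove (mem_image_of_mem _ hp)⟩
  · rintro ⟨hx, hy, hle⟩
    by_contra hp
    obtain ⟨f, u, hfC, hfp⟩ := geometric_hahn_banach_closed_point hconv hcomp.isClosed hp
    have hC : ∀ q ∈ C, f (1, 0) * q.1 + f (0, 1) * q.2 ≤ u := fun q hq =>
      (map_prod_eq_mul_fst_add_mul_snd f q ▸ hfC q hq).le
    have hpu := mul_fst_add_mul_snd_le_of_forall_le_sSup (zero_mem_of_forall_proj_mem hproj hne)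
      (le_max_right _ 0) (le_max_right _ 0)
      (fun q hq => max_zero_mul_fst_add_max_zero_mul_snd_le hproj hC hq) hle
    have hfp_le : f p ≤ max (f (1, 0)) 0 * p.1 + max (f (0, 1)) 0 * p.2 := by
      rw [map_prod_eq_mul_fst_add_mul_snd f p]
      gcongr <;> exact le_max_left _ 0
    linarith
end

section
/- Let k be a positive integer and let 𝒞 ⊆ ℝ^k_{≥0} be non-empty, compact, convex, and closed under the projections π₁,…,π_k. Then 𝒞 = {x ∈ ℝ^k_{≥0} | for all α ∈ Δ_k, αᵀx ≤ C^α(𝒞)}. -/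
/-!
A point `x ≥ 0` outside `𝒞` is separated from it by a hyperplane, `β ⬝ᵥ y < u < β ⬝ᵥ x` for
`y ∈ 𝒞` (Hahn–Banach). Closure under the projections lets one replace `β` by its positive part
`β⁺`: zeroing the coordinates where `β` is negative maps `𝒞` into itself, and on the image `β`
and `β⁺` agree, while `β ⬝ᵥ x ≤ β⁺ ⬝ᵥ x` because `x ≥ 0`. As `0 ∈ 𝒞`, `u > 0`, so `β⁺ ≠ 0`, and
normalising `β⁺` into the simplex gives `α` with `αᵀx > C^α(𝒞)`.
-/

open Finset

section UpdateZeroClosed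

variable {ι M : Type*} [DecidableEq ι] [Zero M] {C : Set (ι → M)}

theorem piecewise_zero_mem_of_update_zero_mem (hproj : ∀ x ∈ C, ∀ j, Function.update x j 0 ∈ C)
    {y : ι → M} (hy : y ∈ C) (s : Finset ι) : s.piecewise (0 : ι → M) y ∈ C := by
  induction s using Finset.induction with
  | empty => simpa using hy
  | insert j s _ ih => simpa [piecewise_insert] using hproj _ ih j

theorem zero_mem_of_update_zero_mem [Fintype ι] (hproj : ∀ x ∈ C, ∀ j, Function.update x j 0 ∈ C)
    (hne : C.Nonempty) : 0 ∈ C := by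
  obtain ⟨y, hy⟩ := hne
  simpa using piecewise_zero_mem_of_update_zero_mem hproj hy univ

end UpdateZeroClosed

variable {ι : Type*} [Fintype ι] [DecidableEq ι] {C : Set (ι → ℝ)}

theorem exists_nonneg_dotProduct_separation (hconv : Convex ℝ C) (hclosed : IsClosed C)
    (hproj : ∀ x ∈ C, ∀ j, Function.update x j 0 ∈ C) {x : ι → ℝ} (hx : 0 ≤ x) (hxC : x ∉ C) :
    ∃ β : ι → ℝ, 0 ≤ β ∧ ∃ u, (∀ y ∈ C, β ⬝ᵥ y < u) ∧ u < β ⬝ᵥ x := by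
  obtain ⟨f, u, hfC, hfx⟩ := geometric_hahn_banach_closed_point hconv hclosed hxC
  set b := (dotProductEquiv ℝ ι).symm f.toLinearMap
  have hf : ∀ z, f z = b ⬝ᵥ z := fun z =>
    (LinearMap.congr_fun ((dotProductEquiv ℝ ι).apply_symm_apply f.toLinearMap) z).symm
  refine ⟨b⁺, posPart_nonneg b, u, fun y hy => ?_, ?_⟩
  · have hcut : b⁺ ⬝ᵥ y = b ⬝ᵥ {j | b j < 0}.toFinset.piecewise 0 y := by
      refine sum_congr rfl fun j _ => ?_
      by_cases hj : b j < 0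
      · simp [hj, posPart_eq_zero.mpr hj.le]
      · simp [hj, posPart_eq_self.mpr (not_lt.mp hj)]
    simpa [hcut, hf] using
      hfC _ (piecewise_zero_mem_of_update_zero_mem hproj hy {j | b j < 0}.toFinset)
  · calc u < b ⬝ᵥ x := hf x ▸ hfx
      _ ≤ b⁺ ⬝ᵥ x := dotProduct_le_dotProduct_of_nonneg_right (le_posPart b) hx

theorem exists_stdSimplex_dotProduct_separation (hne : C.Nonempty) (hconv : Convex ℝ C)
    (hclosed : IsClosed C) (hproj : ∀ x ∈ C, ∀ j, Function.update x j 0 ∈ C) {x : ι → ℝ}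
    (hx : 0 ≤ x) (hxC : x ∉ C) :
    ∃ α ∈ stdSimplex ℝ ι, ∃ u, (∀ y ∈ C, α ⬝ᵥ y ≤ u) ∧ u < α ⬝ᵥ x := by
  obtain ⟨β, hβ, u, hC, hux⟩ := exists_nonneg_dotProduct_separation hconv hclosed hproj hx hxC
  have hu : 0 < u := by simpa using hC 0 (zero_mem_of_update_zero_mem hproj hne)
  have hs : 0 < ∑ j, β j := by
    refine (sum_nonneg fun j _ => hβ j).lt_of_ne fun h => ?_
    have hβ0 : β = 0 :=
      funext fun j => (sum_eq_zero_iff_of_nonneg fun j _ => hβ j).mp h.symm j (mem_univ j)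
    simp only [hβ0, zero_dotProduct] at hux
    exact hu.not_gt hux
  refine ⟨(∑ j, β j)⁻¹ • β, ⟨fun j => ?_, ?_⟩, (∑ j, β j)⁻¹ * u, fun y hy => ?_, ?_⟩
  · exact mul_nonneg (inv_nonneg.2 hs.le) (hβ j)
  · simp [← mul_sum, inv_mul_cancel₀ hs.ne']
  · rw [smul_dotProduct, smul_eq_mul]
    exact mul_le_mul_of_nonneg_left (hC y hy).le (inv_nonneg.2 hs.le)
  · rw [smul_dotProduct, smul_eq_mul]
    exact mul_lt_mul_of_pos_left hux (inv_pos.2 hs)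

theorem region_characterization_general_general (k : ℕ)
    (C : Set (Fin k → ℝ)) (hne : C.Nonempty) (hcomp : IsCompact C)
    (hconv : Convex ℝ C) (hnonneg : ∀ x ∈ C, ∀ j, 0 ≤ x j)
    (hproj : ∀ x ∈ C, ∀ j, Function.update x j 0 ∈ C) :
    C = {x : Fin k → ℝ | (∀ j, 0 ≤ x j) ∧
      ∀ α : Fin k → ℝ, (∀ j, 0 ≤ α j) → ∑ j, α j = 1 →
        ∑ j, α j * x j ≤ sSup ((fun y : Fin k → ℝ => ∑ j, α j * y j) '' C)} := by
  ext x
  refine ⟨fun hx => ⟨hnonneg x hx, fun α _ _ => ?_⟩, fun ⟨hx, hsup⟩ => ?_⟩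
  · exact le_csSup (hcomp.image (by fun_prop)).bddAbove ⟨x, hx, rfl⟩
  · by_contra hxC
    obtain ⟨α, ⟨hα, hα1⟩, u, hC, hux⟩ :=
      exists_stdSimplex_dotProduct_separation hne hconv hcomp.isClosed hproj hx hxC
    have hsup_le : sSup ((fun y : Fin k → ℝ => α ⬝ᵥ y) '' C) ≤ u :=
      csSup_le (hne.image _) (by rintro _ ⟨y, hy, rfl⟩; exact hC y hy)
    exact (hsup α hα hα1).not_gt (hsup_le.trans_lt hux)

/-- **Characterization of special regions in `ℝ^k_{≥0}`** (Lemma 5 of the paper).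
A non-empty, compact, convex subset of `ℝ^k_{≥0}` that is closed under the
coordinate projections `π_j` (setting the `j`-th coordinate to zero) equals the
set of nonnegative vectors `x` with `αᵀx ≤ C^α = max_{y ∈ 𝒞} αᵀy` for all `α`
in the probability simplex `Δ_k`. -/
theorem region_characterization_general (k : ℕ) (hk : 0 < k)
    (C : Set (Fin k → ℝ)) (hne : C.Nonempty) (hcomp : IsCompact C)
    (hconv : Convex ℝ C) (hnonneg : ∀ x ∈ C, ∀ j, 0 ≤ x j)
    (hproj : ∀ x ∈ C, ∀ j, Function.update x j 0 ∈ C) :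
    C = {x : Fin k → ℝ | (∀ j, 0 ≤ x j) ∧
      ∀ α : Fin k → ℝ, (∀ j, 0 ≤ α j) → ∑ j, α j = 1 →
        ∑ j, α j * x j ≤ sSup ((fun y : Fin k → ℝ => ∑ j, α j * y j) '' C)} :=
  region_characterization_general_general k C hne hcomp hconv hnonneg hproj
end

section
/- Let A = (a_{ij}) be an m×n (0,1)-matrix and let N_A denote the number of entries of A equal to 1. Let k be a positive integer with k ≤ min(m,n). Then the number of pairs (π₁,π₂), where π₁ is a permutation of [m] and π₂ is a permutation of [n], such that a_{π₁(ℓ)π₂(ℓ)} = 1 for every ℓ ∈ [k], is at most C(N_A,k) · k! · (m−k)! · (n−k)!. Equivalently, if Π₁ and Π₂ are independent and uniformly distributed random permutations of [m] and [n] respectively, then Pr{ a_{Π₁(ℓ)Π₂(ℓ)} = 1 for all ℓ ∈ [k] } ≤ C(N_A,k) / (k!·C(m,k)·C(n,k)). -/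
/-!
Restricting a counted pair `(π₁, π₂)` to the first `k` positions gives an injection
`ℓ ↦ (π₁ ℓ, π₂ ℓ)` of `[k]` into the set of ones of `A`, and there are `C(N_A, k) · k!` of these.
Once this injection is fixed, `π₁` is determined by an injection of the complement of `[k]` into
the complement of the image of `[k]`, leaving at most `(m - k)!` choices, and likewise at most
`(n - k)!` for `π₂`. The probabilistic form follows from `m! = C(m, k) · k! · (m - k)!`.
-/

open Finset Function Nat

variable {ι α β : Type*}

theorem card_compl_range_of_injective [Fintype ι] [Fintype α] [DecidableEq α] {f : ι → α}
    (hf : Injective f) :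
    Fintype.card {a // a ∉ Set.range f} = Fintype.card α - Fintype.card ι := by
  rw [Fintype.card_subtype_compl, Set.card_range_of_injective hf]

theorem card_perm_comp_eq_le [Finite ι] [Finite α] {f : ι → α} (hf : Injective f) (v : ι → α) :
    Nat.card {σ : Equiv.Perm α // σ ∘ f = v} ≤ (Nat.card α - Nat.card ι)! := by
  classical
  cases nonempty_fintype ι; cases nonempty_fintype α
  rcases isEmpty_or_nonempty {σ : Equiv.Perm α // σ ∘ f = v} with _ | ⟨⟨σ₀, rfl⟩⟩
  · simp
  let restrict (σ : {σ : Equiv.Perm α // σ ∘ f = σ₀ ∘ f}) :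
      {a // a ∉ Set.range f} ↪ {a // a ∉ Set.range (σ₀ ∘ f)} :=
    ⟨fun a => ⟨σ.1 a, by
        rintro ⟨i, hi⟩
        exact a.2 ⟨i, σ.1.injective ((congrFun σ.2 i).trans hi)⟩⟩,
      fun a b hab => Subtype.ext (σ.1.injective (congrArg Subtype.val hab))⟩
  have restrict_injective : Injective restrict := by
    intro σ τ hστ
    refine Subtype.ext (Equiv.ext fun a => ?_)
    by_cases ha : a ∈ Set.range f
    · obtain ⟨i, rfl⟩ := ha
      exact congrFun (σ.2.trans τ.2.symm) i
    · exact congrArg Subtype.val (DFunLike.congr_fun hστ ⟨a, ha⟩)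
  calc Nat.card {σ : Equiv.Perm α // σ ∘ f = σ₀ ∘ f}
      ≤ Nat.card ({a // a ∉ Set.range f} ↪ {a // a ∉ Set.range (σ₀ ∘ f)}) :=
        Nat.card_le_card_of_injective restrict restrict_injective
    _ = (Nat.card α - Nat.card ι)! := by
        rw [Nat.card_eq_fintype_card, Fintype.card_embedding_eq,
          card_compl_range_of_injective hf,
          card_compl_range_of_injective (σ₀.injective.comp hf), descFactorial_self,
          Nat.card_eq_fintype_card, Nat.card_eq_fintype_card]

theorem card_perm_prod_comp_eq_le [Finite ι] [Finite α] [Finite β] {f : ι → α} {g : ι → β}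
    (hf : Injective f) (hg : Injective g) (w : ι → α × β) :
    Nat.card {π : Equiv.Perm α × Equiv.Perm β // ∀ i, (π.1 (f i), π.2 (g i)) = w i} ≤
      (Nat.card α - Nat.card ι)! * (Nat.card β - Nat.card ι)! := by
  have e : {π : Equiv.Perm α × Equiv.Perm β // ∀ i, (π.1 (f i), π.2 (g i)) = w i} ≃
      {σ : Equiv.Perm α // σ ∘ f = Prod.fst ∘ w} × {τ : Equiv.Perm β // τ ∘ g = Prod.snd ∘ w} :=
    (Equiv.subtypeEquivRight fun π => by simp [funext_iff, Prod.ext_iff, forall_and]).trans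
      Equiv.subtypeProdEquivProd
  rw [Nat.card_congr e, Nat.card_prod]
  exact Nat.mul_le_mul (card_perm_comp_eq_le hf _) (card_perm_comp_eq_le hg _)

theorem card_perm_prod_forall_rel_le [Finite ι] [Finite α] [Finite β] {f : ι → α} {g : ι → β}
    (hf : Injective f) (hg : Injective g) (R : α → β → Prop) :
    Nat.card {π : Equiv.Perm α × Equiv.Perm β // ∀ i, R (π.1 (f i)) (π.2 (g i))} ≤
      (Nat.card {p : α × β // R p.1 p.2}).choose (Nat.card ι) * (Nat.card ι)! *
        (Nat.card α - Nat.card ι)! * (Nat.card β - Nat.card ι)! := by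
  classical
  cases nonempty_fintype ι; cases nonempty_fintype α; cases nonempty_fintype β
  let G := {π : Equiv.Perm α × Equiv.Perm β // ∀ i, R (π.1 (f i)) (π.2 (g i))}
  let diag (π : G) : ι ↪ {p : α × β // R p.1 p.2} :=
    ⟨fun i => ⟨(π.1.1 (f i), π.1.2 (g i)), π.2 i⟩,
      fun i j hij => hf (π.1.1.injective (congrArg (·.1.1) hij))⟩
  have fiber_card_le (e : ι ↪ {p : α × β // R p.1 p.2}) :
      #{π | diag π = e} ≤ (Nat.card α - Nat.card ι)! * (Nat.card β - Nat.card ι)! := by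
    let forget (π : {π // diag π = e}) :
        {π : Equiv.Perm α × Equiv.Perm β // ∀ i, (π.1 (f i), π.2 (g i)) = (e i).1} :=
      ⟨π.1.1, fun i => congrArg Subtype.val (DFunLike.congr_fun π.2 i)⟩
    have forget_injective : Injective forget := fun π τ h =>
      Subtype.ext (Subtype.ext (congrArg Subtype.val h :))
    rw [← Fintype.card_subtype, ← Nat.card_eq_fintype_card]
    exact (Nat.card_le_card_of_injective forget forget_injective).trans
      (card_perm_prod_comp_eq_le hf hg _)
  calc Nat.card G = #(univ : Finset G) := by rw [Finset.card_univ, Nat.card_eq_fintype_card]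
    _ ≤ ((Nat.card α - Nat.card ι)! * (Nat.card β - Nat.card ι)!) *
          #(univ : Finset (ι ↪ {p : α × β // R p.1 p.2})) :=
        card_le_mul_card_image_of_maps_to (fun π _ => mem_univ (diag π)) _
          fun e _ => fiber_card_le e
    _ = _ := by
        simp only [Finset.card_univ, Fintype.card_embedding_eq,
          descFactorial_eq_factorial_mul_choose, Nat.card_eq_fintype_card]
        ring

theorem div_factorial_mul_factorial_le {c N m n k : ℕ} (hkm : k ≤ m) (hkn : k ≤ n)
    (hc : c ≤ N * k ! * (m - k)! * (n - k)!) :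
    (c : ℝ) / (m ! * n !) ≤ N / (k ! * m.choose k * n.choose k) := by
  have hm := choose_mul_factorial_mul_factorial hkm
  have hn := choose_mul_factorial_mul_factorial hkn
  have hmk := choose_pos hkm
  have hnk := choose_pos hkn
  rw [div_le_div_iff₀ (by positivity) (by positivity)]
  calc (c : ℝ) * (k ! * m.choose k * n.choose k)
      ≤ (N * k ! * (m - k)! * (n - k)! : ℕ) * (k ! * m.choose k * n.choose k) := by
        gcongr
    _ = N * ((m.choose k * k ! * (m - k)! : ℕ) * (n.choose k * k ! * (n - k)! : ℕ)) := by
        push_cast; ring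
    _ = N * (m ! * n !) := by rw [hm, hn]

theorem diag_ones_count_bound_general (m n k : ℕ) (hkm : k ≤ m) (hkn : k ≤ n)
    (A : Fin m → Fin n → Bool) :
    Nat.card {π : Equiv.Perm (Fin m) × Equiv.Perm (Fin n) //
        ∀ ℓ : Fin k, A (π.1 (Fin.castLE hkm ℓ)) (π.2 (Fin.castLE hkn ℓ)) = true} ≤
      Nat.choose (Nat.card {p : Fin m × Fin n // A p.1 p.2 = true}) k *
        Nat.factorial k * Nat.factorial (m - k) * Nat.factorial (n - k) ∧
    (Nat.card {π : Equiv.Perm (Fin m) × Equiv.Perm (Fin n) //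
        ∀ ℓ : Fin k, A (π.1 (Fin.castLE hkm ℓ)) (π.2 (Fin.castLE hkn ℓ)) = true} : ℝ) /
        (Nat.factorial m * Nat.factorial n) ≤
      (Nat.choose (Nat.card {p : Fin m × Fin n // A p.1 p.2 = true}) k : ℝ) /
        (Nat.factorial k * Nat.choose m k * Nat.choose n k) := by
  have count := card_perm_prod_forall_rel_le (Fin.castLE_injective hkm)
    (Fin.castLE_injective hkn) fun a b => A a b = true
  rw [Nat.card_fin, Nat.card_fin, Nat.card_fin] at count
  exact ⟨count, div_factorial_mul_factorial_le hkm hkn count⟩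

/-- Counting/probability bound on pairs of permutations placing ones on the
first `k` diagonal positions of the permuted matrix. `A : Fin m → Fin n → Bool`
is a (0,1)-matrix (1 ↔ `true`), `N_A` its number of ones. The number of pairs
`(π₁, π₂)` of permutations of `[m]` and `[n]` with `a_{π₁(ℓ) π₂(ℓ)} = 1` for all
`ℓ ∈ [k]` is at most `C(N_A, k)·k!·(m-k)!·(n-k)!`; equivalently, the probability
of this event for independent uniform random permutations is at most
`C(N_A, k) / (k!·C(m,k)·C(n,k))`. -/
theorem diag_ones_count_bound (m n k : ℕ) (hk : 0 < k) (hkm : k ≤ m) (hkn : k ≤ n)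
    (A : Fin m → Fin n → Bool) :
    Nat.card {π : Equiv.Perm (Fin m) × Equiv.Perm (Fin n) //
        ∀ ℓ : Fin k, A (π.1 (Fin.castLE hkm ℓ)) (π.2 (Fin.castLE hkn ℓ)) = true} ≤
      Nat.choose (Nat.card {p : Fin m × Fin n // A p.1 p.2 = true}) k *
        Nat.factorial k * Nat.factorial (m - k) * Nat.factorial (n - k) ∧
    (Nat.card {π : Equiv.Perm (Fin m) × Equiv.Perm (Fin n) //
        ∀ ℓ : Fin k, A (π.1 (Fin.castLE hkm ℓ)) (π.2 (Fin.castLE hkn ℓ)) = true} : ℝ) /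
        (Nat.factorial m * Nat.factorial n) ≤
      (Nat.choose (Nat.card {p : Fin m × Fin n // A p.1 p.2 = true}) k : ℝ) /
        (Nat.factorial k * Nat.choose m k * Nat.choose n k) :=
  diag_ones_count_bound_general m n k hkm hkn A
end

section
/- Let A = (a_{ij}) be an m×n (0,1)-matrix with N_A entries equal to 1 and let k be a positive integer with k ≤ min(m,n). Then the number of pairs (π₁,π₂), where π₁ is a permutation of [m] and π₂ is a permutation of [n], such that at least one block B_{st}(π₁,π₂) with (s,t) ∈ [⌊m/k⌋]×[⌊n/k⌋] consists entirely of ones, is at most m!·n!·(mn/k²)·(N_A·e²/(mn))^k. -/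
/-- The block `B_{st}(π₁, π₂)` (0-indexed, so the paper's `B_{11}` is `s = t = 0`)
of the permuted matrix consists entirely of ones. -/
def allOnesBlock (m n k : ℕ) (A : Fin m → Fin n → Bool) (s t : ℕ)
    (π₁ : Equiv.Perm (Fin m)) (π₂ : Equiv.Perm (Fin n)) : Prop :=
  ∀ (i : Fin m) (j : Fin n),
    s * k ≤ i.val → i.val < (s + 1) * k →
    t * k ≤ j.val → j.val < (t + 1) * k →
    A (π₁ i) (π₂ j) = true

/-- The number of equivalences between two fintypes is at most `(card α)!`. -/
lemma card_equiv_le (α β : Type*) [Fintype α] [Fintype β] [DecidableEq α] [DecidableEq β] :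
    Fintype.card (α ≃ β) ≤ (Fintype.card α).factorial := by
  rcases isEmpty_or_nonempty (α ≃ β) with h | h
  · simp [Fintype.card_eq_zero]
  · exact le_of_eq (Fintype.card_equiv (Classical.arbitrary _))

/-- Key factorial estimate: `m^k · (m-k)! ≤ e^k · m!` for `k ≤ m`. -/
lemma pow_mul_factorial_le (m k : ℕ) (hk : k ≤ m) :
    (m : ℝ) ^ k * ((m - k).factorial : ℝ) ≤ Real.exp 1 ^ k * (m.factorial : ℝ) := by
  have hprodfac : (∏ i ∈ Finset.range k, (k - i)) = k.factorial := by
    rw [← Finset.prod_range_add_one_eq_factorial, ← Finset.prod_range_reflect (fun j => j + 1) k]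
    refine Finset.prod_congr rfl fun i hi => ?_
    rw [Finset.mem_range] at hi
    omega
  have hnat : m ^ k * k.factorial ≤ k ^ k * m.descFactorial k := by
    have h1 : m ^ k * k.factorial = ∏ i ∈ Finset.range k, (m * (k - i)) := by
      rw [Finset.prod_mul_distrib, Finset.prod_const, Finset.card_range, hprodfac]
    have h2 : k ^ k * m.descFactorial k = ∏ i ∈ Finset.range k, (k * (m - i)) := by
      rw [Finset.prod_mul_distrib, Finset.prod_const, Finset.card_range,
        Nat.descFactorial_eq_prod_range]
    rw [h1, h2]
    refine Finset.prod_le_prod' fun i hi => ?_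
    rw [Finset.mem_range] at hi
    have h4 : i ≤ k := hi.le
    have h5 : i ≤ m := h4.trans hk
    zify [h4, h5]
    nlinarith [mul_nonneg (sub_nonneg.2 (by exact_mod_cast hk : (k : ℤ) ≤ m))
      (by exact_mod_cast Nat.zero_le i : (0 : ℤ) ≤ i)]
  have hfk : (0 : ℝ) < (k.factorial : ℝ) := by exact_mod_cast k.factorial_pos
  have hkk : (k : ℝ) ^ k ≤ Real.exp 1 ^ k * (k.factorial : ℝ) := by
    have h := Real.pow_div_factorial_le_exp (x := (k : ℝ)) (Nat.cast_nonneg k) k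
    rw [div_le_iff₀ hfk] at h
    calc (k : ℝ) ^ k ≤ Real.exp k * k.factorial := h
      _ = Real.exp 1 ^ k * k.factorial := by rw [Real.exp_one_pow]
  have hr : (m : ℝ) ^ k ≤ Real.exp 1 ^ k * (m.descFactorial k : ℝ) := by
    refine le_of_mul_le_mul_right ?_ hfk
    have h5 : (m : ℝ) ^ k * (k.factorial : ℝ) ≤ (k : ℝ) ^ k * (m.descFactorial k : ℝ) := by
      exact_mod_cast hnat
    calc (m : ℝ) ^ k * (k.factorial : ℝ) ≤ (k : ℝ) ^ k * (m.descFactorial k : ℝ) := h5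
      _ ≤ (Real.exp 1 ^ k * (k.factorial : ℝ)) * (m.descFactorial k : ℝ) :=
          mul_le_mul_of_nonneg_right hkk (Nat.cast_nonneg _)
      _ = Real.exp 1 ^ k * (m.descFactorial k : ℝ) * (k.factorial : ℝ) := by ring
  have hdesc : ((m - k).factorial * m.descFactorial k) = m.factorial :=
    Nat.factorial_mul_descFactorial hk
  calc (m : ℝ) ^ k * ((m - k).factorial : ℝ)
      ≤ (Real.exp 1 ^ k * (m.descFactorial k : ℝ)) * ((m - k).factorial : ℝ) :=
        mul_le_mul_of_nonneg_right hr (Nat.cast_nonneg _)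
    _ = Real.exp 1 ^ k * (((m - k).factorial * m.descFactorial k : ℕ) : ℝ) := by
        push_cast; ring
    _ = Real.exp 1 ^ k * (m.factorial : ℝ) := by rw [hdesc]

/-- Counting permutation pairs making one fixed block all ones. -/
lemma count_block (m n k : ℕ) (s t : ℕ)
    (hsm : (s + 1) * k ≤ m) (htn : (t + 1) * k ≤ n)
    (A : Fin m → Fin n → Bool) :
    Nat.card {π : Equiv.Perm (Fin m) × Equiv.Perm (Fin n) //
        allOnesBlock m n k A s t π.1 π.2} ≤
      Nat.card {p : Fin m × Fin n // A p.1 p.2 = true} ^ k *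
        ((m - k).factorial * (n - k).factorial) := by
  classical
  have hsk : s * k + k ≤ m := by nlinarith
  have htk : t * k + k ≤ n := by nlinarith
  set Ones := {p : Fin m × Fin n // A p.1 p.2 = true} with hOnes
  set Bad := {π : Equiv.Perm (Fin m) × Equiv.Perm (Fin n) //
      allOnesBlock m n k A s t π.1 π.2} with hBad
  let row : Fin k → Fin m := fun i => ⟨s * k + i.1, by have := i.2; omega⟩
  let col : Fin k → Fin n := fun j => ⟨t * k + j.1, by have := j.2; omega⟩
  have hrowb : ∀ i : Fin k, s * k ≤ (row i).val ∧ (row i).val < (s + 1) * k := by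
    intro i
    have h1 : (s + 1) * k = s * k + k := by ring
    have := i.2
    exact ⟨Nat.le_add_right _ _, by simp only [row]; omega⟩
  have hcolb : ∀ j : Fin k, t * k ≤ (col j).val ∧ (col j).val < (t + 1) * k := by
    intro j
    have h1 : (t + 1) * k = t * k + k := by ring
    have := j.2
    exact ⟨Nat.le_add_right _ _, by simp only [col]; omega⟩
  have hrowinj : Function.Injective row := by
    intro i j h
    have : s * k + i.1 = s * k + j.1 := congrArg Fin.val h
    exact Fin.ext (by omega)
  have hcolinj : Function.Injective col := by
    intro i j h
    have : t * k + i.1 = t * k + j.1 := congrArg Fin.val h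
    exact Fin.ext (by omega)
  let dmap : Bad → (Fin k → Ones) := fun π i =>
    ⟨(π.1.1 (row i), π.1.2 (col i)),
      π.2 (row i) (col i) (hrowb i).1 (hrowb i).2 (hcolb i).1 (hcolb i).2⟩
  have key : ∀ d : Fin k → Ones,
      Fintype.card {π : Bad // dmap π = d} ≤ (m - k).factorial * (n - k).factorial := by
    intro d
    have hd1 : ∀ (p : {π : Bad // dmap π = d}) (i : Fin k), (d i).1.1 = p.1.1.1 (row i) :=
      fun p i => (congrArg (fun f => ((f i : Ones).1.1)) p.2).symm
    have hd2 : ∀ (p : {π : Bad // dmap π = d}) (j : Fin k), (d j).1.2 = p.1.1.2 (col j) :=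
      fun p j => (congrArg (fun f => ((f j : Ones).1.2)) p.2).symm
    have hiff1 : ∀ (p : {π : Bad // dmap π = d}) (x : Fin m),
        (∀ i : Fin k, x ≠ row i) ↔ (∀ i : Fin k, p.1.1.1 x ≠ (d i).1.1) := by
      intro p x
      constructor
      · intro hx i hc
        exact hx i (p.1.1.1.injective (by rw [hc, hd1 p i]))
      · intro hx i hc
        apply hx i
        rw [hc]
        exact (hd1 p i).symm
    have hiff2 : ∀ (p : {π : Bad // dmap π = d}) (x : Fin n),
        (∀ j : Fin k, x ≠ col j) ↔ (∀ j : Fin k, p.1.1.2 x ≠ (d j).1.2) := by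
      intro p x
      constructor
      · intro hx j hc
        exact hx j (p.1.1.2.injective (by rw [hc, hd2 p j]))
      · intro hx j hc
        apply hx j
        rw [hc]
        exact (hd2 p j).symm
    let Ψ : {π : Bad // dmap π = d} →
        (({x : Fin m // ∀ i : Fin k, x ≠ row i} ≃ {y : Fin m // ∀ i : Fin k, y ≠ (d i).1.1}) ×
         ({x : Fin n // ∀ j : Fin k, x ≠ col j} ≃ {y : Fin n // ∀ j : Fin k, y ≠ (d j).1.2})) :=
      fun p => (Equiv.subtypeEquiv p.1.1.1 (hiff1 p), Equiv.subtypeEquiv p.1.1.2 (hiff2 p))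
    have hinj : Function.Injective Ψ := by
      intro a b hab
      have h1 := congrArg Prod.fst hab
      have h2 := congrArg Prod.snd hab
      simp only [Ψ] at h1 h2
      apply Subtype.ext
      apply Subtype.ext
      apply Prod.ext
      · refine Equiv.ext fun x => ?_
        by_cases hx : ∀ i : Fin k, x ≠ row i
        · have := congrArg (fun e => ((e ⟨x, hx⟩ :
            {y : Fin m // ∀ i : Fin k, y ≠ (d i).1.1}).val)) h1
          simpa [Equiv.subtypeEquiv] using this
        · push_neg at hx
          obtain ⟨i, hi⟩ := hx
          rw [hi, ← hd1 a i, ← hd1 b i]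
      · refine Equiv.ext fun x => ?_
        by_cases hx : ∀ j : Fin k, x ≠ col j
        · have := congrArg (fun e => ((e ⟨x, hx⟩ :
            {y : Fin n // ∀ j : Fin k, y ≠ (d j).1.2}).val)) h2
          simpa [Equiv.subtypeEquiv] using this
        · push_neg at hx
          obtain ⟨j, hj⟩ := hx
          rw [hj, ← hd2 a j, ← hd2 b j]
    have hcompl1 : Fintype.card {x : Fin m // ∀ i : Fin k, x ≠ row i} = m - k := by
      have e1 : Fin k ≃ {x : Fin m // ∃ i : Fin k, row i = x} :=
        Equiv.ofBijective (fun i => ⟨row i, ⟨i, rfl⟩⟩)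
          ⟨fun i j h => hrowinj (congrArg Subtype.val h),
           by rintro ⟨x, i, rfl⟩; exact ⟨i, rfl⟩⟩
      have hc1 : Fintype.card {x : Fin m // ∃ i : Fin k, row i = x} = k :=
        (Fintype.card_congr e1).symm.trans (Fintype.card_fin k)
      have e2 : {x : Fin m // ∀ i : Fin k, x ≠ row i} ≃
          {x : Fin m // ¬ ∃ i : Fin k, row i = x} :=
        Equiv.subtypeEquivRight (fun x => by
          constructor
          · rintro hx ⟨i, hi⟩; exact hx i hi.symm
          · intro hx i hi; exact hx ⟨i, hi.symm⟩)
      rw [Fintype.card_congr e2, Fintype.card_subtype_compl, hc1, Fintype.card_fin]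
    have hcompl2 : Fintype.card {x : Fin n // ∀ j : Fin k, x ≠ col j} = n - k := by
      have e1 : Fin k ≃ {x : Fin n // ∃ j : Fin k, col j = x} :=
        Equiv.ofBijective (fun j => ⟨col j, ⟨j, rfl⟩⟩)
          ⟨fun i j h => hcolinj (congrArg Subtype.val h),
           by rintro ⟨x, j, rfl⟩; exact ⟨j, rfl⟩⟩
      have hc1 : Fintype.card {x : Fin n // ∃ j : Fin k, col j = x} = k :=
        (Fintype.card_congr e1).symm.trans (Fintype.card_fin k)
      have e2 : {x : Fin n // ∀ j : Fin k, x ≠ col j} ≃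
          {x : Fin n // ¬ ∃ j : Fin k, col j = x} :=
        Equiv.subtypeEquivRight (fun x => by
          constructor
          · rintro hx ⟨j, hj⟩; exact hx j hj.symm
          · intro hx j hj; exact hx ⟨j, hj.symm⟩)
      rw [Fintype.card_congr e2, Fintype.card_subtype_compl, hc1, Fintype.card_fin]
    calc Fintype.card {π : Bad // dmap π = d}
        ≤ Fintype.card
          (({x : Fin m // ∀ i : Fin k, x ≠ row i} ≃ {y : Fin m // ∀ i : Fin k, y ≠ (d i).1.1}) ×
           ({x : Fin n // ∀ j : Fin k, x ≠ col j} ≃ {y : Fin n // ∀ j : Fin k, y ≠ (d j).1.2})) :=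
          Fintype.card_le_of_injective Ψ hinj
      _ = Fintype.card
          ({x : Fin m // ∀ i : Fin k, x ≠ row i} ≃ {y : Fin m // ∀ i : Fin k, y ≠ (d i).1.1}) *
          Fintype.card
          ({x : Fin n // ∀ j : Fin k, x ≠ col j} ≃ {y : Fin n // ∀ j : Fin k, y ≠ (d j).1.2}) :=
          Fintype.card_prod _ _
      _ ≤ (m - k).factorial * (n - k).factorial := by
          refine Nat.mul_le_mul ?_ ?_
          · exact (card_equiv_le _ _).trans (le_of_eq (by rw [hcompl1]))
          · exact (card_equiv_le _ _).trans (le_of_eq (by rw [hcompl2]))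
  have htotal : Fintype.card Bad = ∑ d : Fin k → Ones, Fintype.card {π : Bad // dmap π = d} :=
    (Fintype.card_congr (Equiv.sigmaFiberEquiv dmap).symm).trans Fintype.card_sigma
  have : Fintype.card Bad ≤ Fintype.card Ones ^ k * ((m - k).factorial * (n - k).factorial) := by
    calc Fintype.card Bad = ∑ d : Fin k → Ones, Fintype.card {π : Bad // dmap π = d} := htotal
      _ ≤ ∑ _d : Fin k → Ones, (m - k).factorial * (n - k).factorial :=
          Finset.sum_le_sum (fun d _ => key d)
      _ = Fintype.card (Fin k → Ones) * ((m - k).factorial * (n - k).factorial) := by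
          rw [Finset.sum_const, Finset.card_univ, smul_eq_mul]
      _ = Fintype.card Ones ^ k * ((m - k).factorial * (n - k).factorial) := by
          rw [Fintype.card_fun, Fintype.card_fin]
  calc Nat.card Bad = Fintype.card Bad := Nat.card_eq_fintype_card
    _ ≤ Fintype.card Ones ^ k * ((m - k).factorial * (n - k).factorial) := this
    _ = Nat.card Ones ^ k * ((m - k).factorial * (n - k).factorial) := by
        rw [Nat.card_eq_fintype_card]

/-- The number of pairs `(π₁, π₂)` of permutations of `[m]` and `[n]` for which
at least one block `B_{st}(π₁, π₂)` consists entirely of ones is at most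
`m!·n!·(mn/k²)·(N_A·e²/(mn))^k`, where `N_A` is the number of ones in the
(0,1)-matrix `A` (1 ↔ `true`). -/
theorem bad_pairs_count_bound (m n k : ℕ) (hk : 0 < k) (hkm : k ≤ m) (hkn : k ≤ n)
    (A : Fin m → Fin n → Bool) :
    (Nat.card {π : Equiv.Perm (Fin m) × Equiv.Perm (Fin n) //
        ∃ s t : ℕ, s < m / k ∧ t < n / k ∧ allOnesBlock m n k A s t π.1 π.2} : ℝ) ≤
      (Nat.factorial m : ℝ) * Nat.factorial n * ((m * n : ℝ) / (k : ℝ) ^ 2) *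
        (((Nat.card {p : Fin m × Fin n // A p.1 p.2 = true} : ℝ) * Real.exp 1 ^ 2) /
          (m * n)) ^ k := by
  classical
  set N := Nat.card {p : Fin m × Fin n // A p.1 p.2 = true} with hN
  set BadAll := {π : Equiv.Perm (Fin m) × Equiv.Perm (Fin n) //
      ∃ s t : ℕ, s < m / k ∧ t < n / k ∧ allOnesBlock m n k A s t π.1 π.2} with hBadAll
  have hnatbound : Nat.card BadAll ≤
      (m / k) * (n / k) * (N ^ k * ((m - k).factorial * (n - k).factorial)) := by
    let f : BadAll → Fin (m / k) × Fin (n / k) := fun π =>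
      (⟨π.2.choose, π.2.choose_spec.choose_spec.1⟩,
       ⟨π.2.choose_spec.choose, π.2.choose_spec.choose_spec.2.1⟩)
    have hf : ∀ π : BadAll, allOnesBlock m n k A (f π).1.val (f π).2.val π.1.1 π.1.2 :=
      fun π => π.2.choose_spec.choose_spec.2.2
    have hfiber : ∀ st : Fin (m / k) × Fin (n / k),
        Fintype.card {π : BadAll // f π = st} ≤
          N ^ k * ((m - k).factorial * (n - k).factorial) := by
      intro st
      have hsm : (st.1.val + 1) * k ≤ m :=
        le_trans (Nat.mul_le_mul_right k st.1.isLt) (Nat.div_mul_le_self m k)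
      have htn : (st.2.val + 1) * k ≤ n :=
        le_trans (Nat.mul_le_mul_right k st.2.isLt) (Nat.div_mul_le_self n k)
      have hinj : Function.Injective (fun p : {π : BadAll // f π = st} =>
          (⟨p.1.1, by have h3 := hf p.1; rwa [p.2] at h3⟩ :
            {π : Equiv.Perm (Fin m) × Equiv.Perm (Fin n) //
              allOnesBlock m n k A st.1.val st.2.val π.1 π.2})) := by
        intro a b h
        simp only [Subtype.mk.injEq] at h
        apply Subtype.ext
        apply Subtype.ext
        exact h
      have hle := Fintype.card_le_of_injective _ hinj
      have hcb := count_block m n k st.1.val st.2.val hsm htn A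
      refine le_trans hle ?_
      rw [← Nat.card_eq_fintype_card]
      exact hcb
    have htotal : Fintype.card BadAll =
        ∑ st : Fin (m / k) × Fin (n / k), Fintype.card {π : BadAll // f π = st} :=
      (Fintype.card_congr (Equiv.sigmaFiberEquiv f).symm).trans Fintype.card_sigma
    calc Nat.card BadAll = Fintype.card BadAll := Nat.card_eq_fintype_card
      _ = ∑ st : Fin (m / k) × Fin (n / k), Fintype.card {π : BadAll // f π = st} := htotal
      _ ≤ ∑ _st : Fin (m / k) × Fin (n / k),
            N ^ k * ((m - k).factorial * (n - k).factorial) :=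
          Finset.sum_le_sum (fun st _ => hfiber st)
      _ = (m / k) * (n / k) * (N ^ k * ((m - k).factorial * (n - k).factorial)) := by
          rw [Finset.sum_const, Finset.card_univ, Fintype.card_prod, Fintype.card_fin,
            Fintype.card_fin, smul_eq_mul]
  -- now the real-number estimates
  have hm1 : (1 : ℕ) ≤ m := by omega
  have hn1 : (1 : ℕ) ≤ n := by omega
  have hmpos : (0 : ℝ) < m := by exact_mod_cast hm1
  have hnpos : (0 : ℝ) < n := by exact_mod_cast hn1
  have habpos : (0 : ℝ) < (m : ℝ) * n := mul_pos hmpos hnpos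
  have h1 := pow_mul_factorial_le m k hkm
  have h2 := pow_mul_factorial_le n k hkn
  have main : ((m - k).factorial : ℝ) * ((n - k).factorial : ℝ) * ((m : ℝ) * n) ^ k ≤
      (m.factorial : ℝ) * (n.factorial : ℝ) * (Real.exp 1 ^ 2) ^ k := by
    have hmul := mul_le_mul h1 h2 (by positivity) (by positivity)
    calc ((m - k).factorial : ℝ) * ((n - k).factorial : ℝ) * ((m : ℝ) * n) ^ k
        = ((m : ℝ) ^ k * ((m - k).factorial : ℝ)) * ((n : ℝ) ^ k * ((n - k).factorial : ℝ)) := by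
          rw [mul_pow]; ring
      _ ≤ (Real.exp 1 ^ k * (m.factorial : ℝ)) * (Real.exp 1 ^ k * (n.factorial : ℝ)) := hmul
      _ = (m.factorial : ℝ) * (n.factorial : ℝ) * (Real.exp 1 ^ 2) ^ k := by
          have hp : (Real.exp 1 ^ 2) ^ k = Real.exp 1 ^ k * Real.exp 1 ^ k := by
            rw [← pow_mul, two_mul, pow_add]
          rw [hp]; ring
  have hcast : (Nat.card BadAll : ℝ) ≤
      ((m / k : ℕ) : ℝ) * ((n / k : ℕ) : ℝ) * (N : ℝ) ^ k *
        ((m - k).factorial : ℝ) * ((n - k).factorial : ℝ) := by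
    have := Nat.cast_le (α := ℝ).mpr hnatbound
    push_cast at this ⊢
    nlinarith [this]
  calc (Nat.card BadAll : ℝ)
      ≤ ((m / k : ℕ) : ℝ) * ((n / k : ℕ) : ℝ) * (N : ℝ) ^ k *
          ((m - k).factorial : ℝ) * ((n - k).factorial : ℝ) := hcast
    _ ≤ ((m : ℝ) / k) * ((n : ℝ) / k) * (N : ℝ) ^ k *
          ((m - k).factorial : ℝ) * ((n - k).factorial : ℝ) := by
        gcongr <;> exact Nat.cast_div_le
    _ = ((m : ℝ) * n / (k : ℝ) ^ 2) * (N : ℝ) ^ k *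
          (((m - k).factorial : ℝ) * ((n - k).factorial : ℝ)) := by ring
    _ ≤ ((m : ℝ) * n / (k : ℝ) ^ 2) * (N : ℝ) ^ k *
          ((m.factorial : ℝ) * (n.factorial : ℝ) * (Real.exp 1 ^ 2) ^ k / ((m : ℝ) * n) ^ k) := by
        refine mul_le_mul_of_nonneg_left ?_ (by positivity)
        rw [le_div_iff₀ (by positivity)]
        exact main
    _ = (Nat.factorial m : ℝ) * Nat.factorial n * ((m * n : ℝ) / (k : ℝ) ^ 2) *
          (((N : ℝ) * Real.exp 1 ^ 2) / ((m : ℝ) * n)) ^ k := by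
        rw [div_pow, mul_pow]
        ring
end

section
/- For every α ∈ [0,1), the maximum over p ∈ [0,1/2] of α(log 3 − p) + (1−α)h(p) equals α(log 3 − 1) + (1−α)·log(1 + 2^{α/(1−α)}), and this maximum is attained at p* = 1/(1 + 2^{α/(1−α)}). -/
open Real

/-- The binary entropy function (base-2 logarithm); `Real.logb 2 0 = 0`, so the
convention `0 · log 0 = 0` holds automatically. -/
noncomputable def binEnt (p : ℝ) : ℝ := -(p * logb 2 p) - (1 - p) * logb 2 (1 - p)

/-!
Gibbs' inequality bounds `h(p)` by the cross entropy `-p log q - (1-p) log(1-q)` for every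
`q ∈ (0,1)`, with equality at `q = p`. For `q = p* = 1/(1+t)`, `t = 2^{α/(1-α)}`, the cross
entropy is `log(1+t) - (1-p)·α/(1-α)`, and the objective `α(log 3 - p) + (1-α)·(cross entropy)`
no longer depends on `p`: it is the claimed maximum, attained at `p = p*`.
-/

noncomputable def binCrossEnt (p q : ℝ) : ℝ := -(p * logb 2 q) - (1 - p) * logb 2 (1 - q)

lemma binCrossEnt_self (p : ℝ) : binCrossEnt p p = binEnt p := rfl

lemma mul_log_sub_log_le_sub {x q : ℝ} (hx : 0 ≤ x) (hq : 0 < q) :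
    x * (log q - log x) ≤ q - x := by
  rcases hx.eq_or_lt with rfl | hx
  · simpa using hq.le
  · calc x * (log q - log x) = x * log (q / x) := by rw [log_div hq.ne' hx.ne']
      _ ≤ x * (q / x - 1) := by gcongr; exact log_le_sub_one_of_pos (div_pos hq hx)
      _ = q - x := by field_simp

lemma binEnt_le_binCrossEnt {p q : ℝ} (hp₀ : 0 ≤ p) (hp₁ : p ≤ 1) (hq₀ : 0 < q) (hq₁ : q < 1) :
    binEnt p ≤ binCrossEnt p q := by
  have h₁ := mul_log_sub_log_le_sub hp₀ hq₀
  have h₂ := mul_log_sub_log_le_sub (sub_nonneg.2 hp₁) (sub_pos.2 hq₁)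
  calc binEnt p = (-(p * log p) - (1 - p) * log (1 - p)) / log 2 := by
        simp only [binEnt, logb]; ring
    _ ≤ (-(p * log q) - (1 - p) * log (1 - q)) / log 2 := by
        gcongr ?_ / _
        linarith
    _ = binCrossEnt p q := by simp only [binCrossEnt, logb]; ring

lemma binCrossEnt_one_div_one_add (p : ℝ) {t : ℝ} (ht : 0 < t) :
    binCrossEnt p (1 / (1 + t)) = logb 2 (1 + t) - (1 - p) * logb 2 t := by
  have h1t : 1 + t ≠ 0 := by positivity
  have hcompl : 1 - 1 / (1 + t) = t / (1 + t) := by field_simp; ring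
  rw [binCrossEnt, hcompl, logb_div ht.ne' h1t, one_div, logb_inv]
  ring

/-- For `α ∈ [0,1)`, the maximum over `p ∈ [0,1/2]` of
`α(log 3 − p) + (1−α)h(p)` equals `α(log 3 − 1) + (1−α)·log(1 + 2^{α/(1−α)})`
and is attained at `p* = 1/(1 + 2^{α/(1−α)})` (which lies in `[0,1/2]`). -/
theorem contraction_max_value (α : ℝ) (hα : α ∈ Set.Ico (0 : ℝ) 1) :
    (1 / (1 + (2 : ℝ) ^ (α / (1 - α))) ∈ Set.Icc (0 : ℝ) (1 / 2)) ∧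
    α * (logb 2 3 - 1 / (1 + (2 : ℝ) ^ (α / (1 - α)))) +
        (1 - α) * binEnt (1 / (1 + (2 : ℝ) ^ (α / (1 - α)))) =
      α * (logb 2 3 - 1) + (1 - α) * logb 2 (1 + (2 : ℝ) ^ (α / (1 - α))) ∧
    ∀ p ∈ Set.Icc (0 : ℝ) (1 / 2),
      α * (logb 2 3 - p) + (1 - α) * binEnt p ≤
        α * (logb 2 3 - 1) + (1 - α) * logb 2 (1 + (2 : ℝ) ^ (α / (1 - α))) := by
  obtain ⟨hα₀, hα₁⟩ := hα
  set c := α / (1 - α)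
  have hc : (1 - α) * c = α := mul_div_cancel₀ α (sub_ne_zero.2 hα₁.ne')
  set t := (2 : ℝ) ^ c
  have ht : 1 ≤ t := one_le_rpow one_le_two (div_nonneg hα₀ (sub_nonneg.2 hα₁.le))
  have hlogt : logb 2 t = c := logb_rpow two_pos (by norm_num)
  have hcross (p : ℝ) : binCrossEnt p (1 / (1 + t)) = logb 2 (1 + t) - (1 - p) * c := by
    rw [binCrossEnt_one_div_one_add p (by positivity), hlogt]
  have hq₀ : 0 < 1 / (1 + t) := by positivity
  have hq₁ : 1 / (1 + t) < 1 := (div_lt_one (by positivity)).2 (by linarith)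
  refine ⟨⟨hq₀.le, ?_⟩, ?_, fun p ⟨hp₀, hp₁⟩ => ?_⟩
  · exact one_div_le_one_div_of_le two_pos (by linarith)
  · rw [← binCrossEnt_self, hcross]
    linear_combination (1 / (1 + t) - 1) * hc
  · have hgibbs := binEnt_le_binCrossEnt hp₀ (by linarith) hq₀ hq₁
    rw [hcross] at hgibbs
    linear_combination mul_le_mul_of_nonneg_left hgibbs (sub_nonneg.2 hα₁.le) + (p - 1) * hc
end

section
/- For every α ∈ (0,1), letting p* = 1/(1 + 2^{α/(1−α)}), the strict inequality α(log 3 − p*/3) + (1−α)h(p*) > α(log 3 − 1) + (1−α)·log(1 + 2^{α/(1−α)}) holds; consequently, α(log 3 − p*/3) + (1−α)h(p*) > α(log 3 − p) + (1−α)h(p) for every p ∈ [0,1/2]. -/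
/-!
With `t = 2^{α/(1−α)}`, so that `(1−α)·log t = α`, Gibbs' inequality against the distribution
`(1/(1+t), t/(1+t))` gives `h(p) + (1−p)·log t ≤ log(1+t)` for every `p ∈ [0,1]`, with equality at
`p* = 1/(1+t)`. Hence `α(log 3 − p) + (1−α)h(p) ≤ α(log 3 − 1) + (1−α)·log(1+t)` for all such `p`,
while at `p*` the left-hand side with `p*/3` in place of `p` exceeds this bound by `2αp*/3 > 0`.
-/

open Real

namespace Real

variable {p t x y : ℝ}

lemma negMulLog_le_sub_sub_mul_log (hx : 0 ≤ x) (hy : 0 < y) :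
    negMulLog x ≤ y - x - x * log y := by
  have hxy : negMulLog (x / y) ≤ 1 - x / y := negMulLog_le_one_sub_self (div_nonneg hx hy.le)
  calc negMulLog x = negMulLog (y * (x / y)) := by rw [mul_div_cancel₀ _ hy.ne']
    _ = x / y * negMulLog y + y * negMulLog (x / y) := negMulLog_mul _ _
    _ ≤ x / y * negMulLog y + y * (1 - x / y) := by gcongr
    _ = y - x - x * log y := by
      simp only [negMulLog]
      field_simp
      ring

lemma binEntropy_le_crossEntropy (hp₀ : 0 ≤ p) (hp₁ : p ≤ 1) {q : ℝ} (hq₀ : 0 < q)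
    (hq₁ : q < 1) : binEntropy p ≤ -(p * log q) - (1 - p) * log (1 - q) := by
  rw [binEntropy_eq_negMulLog_add_negMulLog_one_sub]
  linarith [negMulLog_le_sub_sub_mul_log hp₀ hq₀,
    negMulLog_le_sub_sub_mul_log (sub_nonneg.2 hp₁) (sub_pos.2 hq₁)]

lemma log_one_sub_one_div_one_add (ht : 0 < t) :
    log (1 - 1 / (1 + t)) = log t - log (1 + t) := by
  rw [← log_div ht.ne' (by positivity)]
  congr 1
  field_simp
  ring

lemma binEntropy_add_mul_log_le (ht : 0 < t) (hp₀ : 0 ≤ p) (hp₁ : p ≤ 1) :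
    binEntropy p + (1 - p) * log t ≤ log (1 + t) := by
  have hq₀ : 0 < 1 / (1 + t) := by positivity
  have hq₁ : 1 / (1 + t) < 1 := (div_lt_one (by positivity)).2 (by linarith)
  have h := binEntropy_le_crossEntropy hp₀ hp₁ hq₀ hq₁
  rw [log_one_sub_one_div_one_add ht, one_div, log_inv] at h
  linarith

lemma binEntropy_one_div_one_add_add_mul_log (ht : 0 < t) :
    binEntropy (1 / (1 + t)) + (1 - 1 / (1 + t)) * log t = log (1 + t) := by
  rw [binEntropy_eq_negMulLog_add_negMulLog_one_sub]
  simp only [negMulLog]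
  rw [log_one_sub_one_div_one_add ht, one_div, log_inv]
  ring

end Real

lemma binEnt_eq_binEntropy_div (p : ℝ) : binEnt p = binEntropy p / log 2 := by
  simp only [binEnt, logb, binEntropy_eq_negMulLog_add_negMulLog_one_sub, negMulLog]
  ring

section

variable {p t : ℝ}

lemma binEnt_add_mul_logb_le (ht : 0 < t) (hp₀ : 0 ≤ p) (hp₁ : p ≤ 1) :
    binEnt p + (1 - p) * logb 2 t ≤ logb 2 (1 + t) := by
  rw [binEnt_eq_binEntropy_div, logb, logb, mul_div_assoc', ← add_div]
  exact div_le_div_of_nonneg_right (binEntropy_add_mul_log_le ht hp₀ hp₁) (log_pos one_lt_two).le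

lemma binEnt_one_div_one_add_add_mul_logb (ht : 0 < t) :
    binEnt (1 / (1 + t)) + (1 - 1 / (1 + t)) * logb 2 t = logb 2 (1 + t) := by
  rw [binEnt_eq_binEntropy_div, logb, logb, mul_div_assoc', ← add_div,
    binEntropy_one_div_one_add_add_mul_log ht]

end

/-- For `α ∈ (0,1)` and `p* = 1/(1 + 2^{α/(1−α)})`, we have the strict
inequality `α(log 3 − p*/3) + (1−α)h(p*) > α(log 3 − 1) + (1−α)·log(1 + 2^{α/(1−α)})`;
consequently `α(log 3 − p*/3) + (1−α)h(p*) > α(log 3 − p) + (1−α)h(p)` for every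
`p ∈ [0,1/2]`. This is the separation between the average- and maximal-error
bounds for Dueck's contraction MAC underlying Corollary 5 of the paper. -/
theorem contraction_avg_gt_max (α : ℝ) (hα : α ∈ Set.Ioo (0 : ℝ) 1) :
    α * (logb 2 3 - (1 / (1 + (2 : ℝ) ^ (α / (1 - α)))) / 3) +
        (1 - α) * binEnt (1 / (1 + (2 : ℝ) ^ (α / (1 - α)))) >
      α * (logb 2 3 - 1) + (1 - α) * logb 2 (1 + (2 : ℝ) ^ (α / (1 - α))) ∧
    ∀ p ∈ Set.Icc (0 : ℝ) (1 / 2),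
      α * (logb 2 3 - (1 / (1 + (2 : ℝ) ^ (α / (1 - α)))) / 3) +
          (1 - α) * binEnt (1 / (1 + (2 : ℝ) ^ (α / (1 - α)))) >
        α * (logb 2 3 - p) + (1 - α) * binEnt p := by
  obtain ⟨hα₀, hα₁⟩ := hα
  set t : ℝ := (2 : ℝ) ^ (α / (1 - α))
  have ht : 0 < t := by positivity
  have hlogt : (1 - α) * logb 2 t = α := by
    rw [logb_rpow two_pos (by norm_num)]
    field_simp [(sub_pos.2 hα₁).ne']
  have hopt := binEnt_one_div_one_add_add_mul_logb ht
  have hgap : 0 < α * (1 / (1 + t)) := by positivity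
  have hbound : α * (logb 2 3 - 1 / (1 + t) / 3) + (1 - α) * binEnt (1 / (1 + t)) >
      α * (logb 2 3 - 1) + (1 - α) * logb 2 (1 + t) := by
    linear_combination -(1 - α) * hopt + (1 - 1 / (1 + t)) * hlogt + 2 / 3 * hgap
  refine ⟨hbound, fun p hp ↦ ?_⟩
  have hle := binEnt_add_mul_logb_le ht hp.1 (hp.2.trans (by norm_num))
  have hmax : α * (logb 2 3 - p) + (1 - α) * binEnt p ≤
      α * (logb 2 3 - 1) + (1 - α) * logb 2 (1 + t) := by
    linear_combination (1 - α) * hle - (1 - p) * hlogt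
  exact hmax.trans_lt hbound
end
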